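/- The space Hom(ℤ², SO(3)) of ordered commuting pairs of elements of SO(3) has exactly two connected components. -/

import Mathlib

/-- The space `Hom(ℤⁿ, G)` of ordered commuting `n`-tuples of elements of a topological
monoid `G`, topologized as a subspace of `Gⁿ`. -/
abbrev CommTuples (n : ℕ) (G : Type*) [Monoid G] [TopologicalSpace G] : Type _ :=
  {f : Fin n → G // ∀ i j, f i * f j = f j * f i}

/-- The special orthogonal group `SO(3)` of 3×3 real matrices. -/
abbrev SO3 : Type _ := Matrix.specialOrthogonalGroup (Fin 3) ℝ

/-!
A commuting pair `(A, B)` in `SO(3)` either has a common axis, and is then conjugate to a pair of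
rotations `(rotX θ, rotX φ)` about the first coordinate axis, or `A` and `B` are half-turns about
perpendicular axes, and the pair is conjugate to `(diag(1,-1,-1), diag(-1,1,-1))`. Both families
are continuous images of path-connected spaces (`SO(3)` itself is path-connected, every rotation
being conjugate to some `rotX θ`). The invariant `tr A + tr B + tr AB` equals
`3 + 2 (cos θ + cos φ + cos (θ + φ)) ≥ 0` on the first family and `-3` on the second, so the two
families are disjoint and clopen: they are the two connected components.
-/

open Matrix Real

section SpecialOrthogonal

variable {n R : Type*} [Fintype n] [CommRing R]

lemma ne_zero_of_dotProduct_self_eq_one [Nontrivial R] {v : n → R} (hv : v ⬝ᵥ v = 1) :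
    v ≠ 0 := by
  rintro rfl
  simp at hv

lemma exists_smul_dotProduct_self_eq_one {v : n → ℝ} (hv : v ≠ 0) :
    ∃ r : ℝ, r • v ⬝ᵥ r • v = 1 := by
  have hvv : 0 < v ⬝ᵥ v :=
    lt_of_le_of_ne (Finset.sum_nonneg fun i _ => mul_self_nonneg (v i))
      (fun h0 => hv (dotProduct_self_eq_zero.1 h0.symm))
  refine ⟨(√(v ⬝ᵥ v))⁻¹, ?_⟩
  rw [smul_dotProduct, dotProduct_smul, smul_smul, smul_eq_mul, ← sq, inv_pow,
    sq_sqrt hvv.le, inv_mul_cancel₀ hvv.ne']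

variable [DecidableEq n]

lemma mem_specialOrthogonalGroup_iff_transpose_mul_self {A : Matrix n n R} :
    A ∈ specialOrthogonalGroup n R ↔ Aᵀ * A = 1 ∧ A.det = 1 := by
  rw [mem_specialOrthogonalGroup_iff, mem_orthogonalGroup_iff']

lemma transpose_mul_self_of_mem_specialOrthogonalGroup {A : Matrix n n R}
    (hA : A ∈ specialOrthogonalGroup n R) : Aᵀ * A = 1 :=
  (mem_specialOrthogonalGroup_iff_transpose_mul_self.1 hA).1

lemma det_eq_one_of_mem_specialOrthogonalGroup {A : Matrix n n R}
    (hA : A ∈ specialOrthogonalGroup n R) : A.det = 1 :=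
  (mem_specialOrthogonalGroup_iff_transpose_mul_self.1 hA).2

lemma diagonal_mem_specialOrthogonalGroup {d : n → R}
    (hsq : ∀ i, d i * d i = 1) (hprod : ∏ i, d i = 1) :
    diagonal d ∈ specialOrthogonalGroup n R := by
  rw [mem_specialOrthogonalGroup_iff_transpose_mul_self, diagonal_transpose, diagonal_mul_diagonal,
    det_diagonal, ← diagonal_one]
  exact ⟨congrArg diagonal (funext hsq), hprod⟩

lemma det_sub_one_eq_zero_of_odd [IsDomain R] [CharZero R]
    (hn : Odd (Fintype.card n)) {A : Matrix n n R} (hA : A ∈ specialOrthogonalGroup n R) :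
    (A - 1).det = 0 := by
  refine CharZero.eq_neg_self_iff.1 ?_
  calc (A - 1).det = (Aᵀ * (1 - A)).det := by
        rw [Matrix.mul_sub, Matrix.mul_one, transpose_mul_self_of_mem_specialOrthogonalGroup hA,
          ← transpose_one, ← transpose_sub, det_transpose, transpose_one]
    _ = (-(A - 1)).det := by
        rw [det_mul, det_transpose, det_eq_one_of_mem_specialOrthogonalGroup hA, one_mul, neg_sub]
    _ = -(A - 1).det := by rw [det_neg, hn.neg_one_pow, neg_one_mul]

lemma exists_mulVec_eq_self_of_odd [IsDomain R] [CharZero R]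
    (hn : Odd (Fintype.card n)) {A : Matrix n n R} (hA : A ∈ specialOrthogonalGroup n R) :
    ∃ v : n → R, v ≠ 0 ∧ A *ᵥ v = v := by
  obtain ⟨v, hv0, hv⟩ := exists_mulVec_eq_zero_iff.2 (det_sub_one_eq_zero_of_odd hn hA)
  exact ⟨v, hv0, by rwa [sub_mulVec, one_mulVec, sub_eq_zero] at hv⟩

lemma mulVec_dotProduct_mulVec {A : Matrix n n R} (hA : Aᵀ * A = 1)
    (v w : n → R) : A *ᵥ v ⬝ᵥ A *ᵥ w = v ⬝ᵥ w := by
  rw [dotProduct_mulVec, ← mulVec_transpose, mulVec_mulVec, hA, one_mulVec]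

lemma eq_one_or_eq_neg_one_of_mulVec_eq_smul {A : Matrix n n ℝ} (hA : Aᵀ * A = 1)
    {v : n → ℝ} (hv : v ≠ 0) {c : ℝ} (h : A *ᵥ v = c • v) : c = 1 ∨ c = -1 := by
  have hvv : v ⬝ᵥ v ≠ 0 := fun h0 => hv (dotProduct_self_eq_zero.1 h0)
  have h1 := mulVec_dotProduct_mulVec hA v v
  rw [h, smul_dotProduct, dotProduct_smul, smul_smul, smul_eq_mul] at h1
  exact mul_self_eq_one_iff.1 (mul_right_cancel₀ hvv (h1.trans (one_mul _).symm))

end SpecialOrthogonal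

section ThreeDimensional

variable {R : Type*} [CommRing R]

lemma mulVec_cross_mulVec (M : Matrix (Fin 3) (Fin 3) R) (u v : Fin 3 → R) :
    (M *ᵥ u) ⨯₃ (M *ᵥ v) = M.adjugateᵀ *ᵥ (u ⨯₃ v) := by
  ext i
  fin_cases i <;>
    simp [adjugate_fin_three, cross_apply, mulVec, dotProduct, Fin.sum_univ_three] <;> ring

lemma mulVec_cross_of_mem_specialOrthogonalGroup {A : Matrix (Fin 3) (Fin 3) R}
    (hA : A ∈ specialOrthogonalGroup (Fin 3) R) (u v : Fin 3 → R) :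
    A *ᵥ (u ⨯₃ v) = (A *ᵥ u) ⨯₃ (A *ᵥ v) := by
  rw [mem_specialOrthogonalGroup_iff_transpose_mul_self] at hA
  have hadj : A.adjugate = Aᵀ :=
    calc A.adjugate = Aᵀ * (A * A.adjugate) := by rw [← Matrix.mul_assoc, hA.1, Matrix.one_mul]
      _ = Aᵀ := by rw [mul_adjugate, hA.2, one_smul, Matrix.mul_one]
  rw [mulVec_cross_mulVec, hadj, transpose_transpose]

def ofColumns (u v w : Fin 3 → R) : Matrix (Fin 3) (Fin 3) R := (of ![u, v, w])ᵀ

lemma mul_ofColumns (M : Matrix (Fin 3) (Fin 3) R) (u v w : Fin 3 → R) :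
    M * ofColumns u v w = ofColumns (M *ᵥ u) (M *ᵥ v) (M *ᵥ w) := by
  ext i j
  fin_cases j <;> simp [ofColumns, mul_apply, mulVec, dotProduct]

lemma ofColumns_mul_diagonal (u v w d : Fin 3 → R) :
    ofColumns u v w * diagonal d = ofColumns (d 0 • u) (d 1 • v) (d 2 • w) := by
  ext i j
  fin_cases j <;> simp [ofColumns, mul_comm]

lemma ofColumns_mulVec_single_zero (u v w : Fin 3 → R) :
    ofColumns u v w *ᵥ Pi.single 0 1 = u := by
  ext i
  simp [ofColumns]

lemma det_ofColumns (u v w : Fin 3 → R) : (ofColumns u v w).det = u ⬝ᵥ v ⨯₃ w := by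
  rw [ofColumns, det_transpose, triple_product_eq_det]
  rfl

lemma transpose_ofColumns_mul_ofColumns (u v w : Fin 3 → R) :
    (ofColumns u v w)ᵀ * ofColumns u v w =
      !![u ⬝ᵥ u, u ⬝ᵥ v, u ⬝ᵥ w; v ⬝ᵥ u, v ⬝ᵥ v, v ⬝ᵥ w; w ⬝ᵥ u, w ⬝ᵥ v, w ⬝ᵥ w] := by
  ext i j
  fin_cases i <;> fin_cases j <;> simp [ofColumns, mul_apply, dotProduct, Fin.sum_univ_three]

lemma ofColumns_cross_mem_specialOrthogonalGroup {u v : Fin 3 → R} (hu : u ⬝ᵥ u = 1)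
    (hv : v ⬝ᵥ v = 1) (huv : u ⬝ᵥ v = 0) :
    ofColumns u v (u ⨯₃ v) ∈ specialOrthogonalGroup (Fin 3) R := by
  have hcc : u ⨯₃ v ⬝ᵥ u ⨯₃ v = 1 := by
    rw [cross_dot_cross, hu, hv, huv, dotProduct_comm v u, huv]
    ring
  rw [mem_specialOrthogonalGroup_iff_transpose_mul_self, transpose_ofColumns_mul_ofColumns,
    det_ofColumns, triple_product_permutation u v, triple_product_permutation v (u ⨯₃ v), hcc]
  refine ⟨?_, rfl⟩
  rw [dotProduct_comm v u, dotProduct_comm (u ⨯₃ v) u, dotProduct_comm (u ⨯₃ v) v, hu, hv, huv,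
    dot_self_cross, dot_cross_self, one_fin_three]

lemma exists_eq_smul_of_cross_eq_zero {K : Type*} [Field K] {u v : Fin 3 → K} (hu : u ≠ 0)
    (h : u ⨯₃ v = 0) : ∃ c : K, v = c • u := by
  have hdep : ¬LinearIndependent K ![v, u] := by
    rw [← crossProduct_ne_zero_iff_linearIndependent, ← cross_anticomm, h, neg_zero, not_not]
  rw [linearIndependent_fin2] at hdep
  push Not at hdep
  obtain ⟨c, hc⟩ := hdep (by simpa using hu)
  exact ⟨c, by simpa using hc.symm⟩

lemma eq_one_of_mulVec_eq_self_of_cross_ne_zero {A : Matrix (Fin 3) (Fin 3) ℝ}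
    (hA : A ∈ specialOrthogonalGroup (Fin 3) ℝ) {u v : Fin 3 → ℝ} (hu : A *ᵥ u = u)
    (hv : A *ᵥ v = v) (huv : u ⨯₃ v ≠ 0) : A = 1 := by
  have hAP : A * ofColumns u v (u ⨯₃ v) = 1 * ofColumns u v (u ⨯₃ v) := by
    rw [mul_ofColumns, mulVec_cross_of_mem_specialOrthogonalGroup hA, hu, hv, Matrix.one_mul]
  have hdet : (ofColumns u v (u ⨯₃ v)).det ≠ 0 := by
    rw [det_ofColumns, triple_product_permutation, triple_product_permutation v]
    exact fun h0 => huv (dotProduct_self_eq_zero.1 h0)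
  exact ((isUnit_iff_isUnit_det _).2 hdet.isUnit).mul_right_cancel hAP

lemma exists_eq_smul_of_mulVec_eq_self {A : Matrix (Fin 3) (Fin 3) ℝ}
    (hA : A ∈ specialOrthogonalGroup (Fin 3) ℝ) (hA1 : A ≠ 1) {u v : Fin 3 → ℝ} (hu0 : u ≠ 0)
    (hu : A *ᵥ u = u) (hv : A *ᵥ v = v) : ∃ c : ℝ, v = c • u := by
  rcases eq_or_ne (u ⨯₃ v) 0 with h | h
  · exact exists_eq_smul_of_cross_eq_zero hu0 h
  · exact absurd (eq_one_of_mulVec_eq_self_of_cross_ne_zero hA hu hv h) hA1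

lemma exists_orthogonal_unit {v : Fin 3 → ℝ} (hv : v ≠ 0) :
    ∃ w : Fin 3 → ℝ, w ⬝ᵥ w = 1 ∧ v ⬝ᵥ w = 0 := by
  suffices ∃ w : Fin 3 → ℝ, w ≠ 0 ∧ v ⬝ᵥ w = 0 by
    obtain ⟨w, hw0, hvw⟩ := this
    obtain ⟨r, hr⟩ := exists_smul_dotProduct_self_eq_one hw0
    exact ⟨r • w, hr, by rw [dotProduct_smul, hvw, smul_zero]⟩
  by_contra! h
  have hcross : ∀ i, v ⨯₃ Pi.single i 1 = 0 := fun i => by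
    by_contra h0
    exact h _ h0 (dot_self_cross _ _)
  apply hv
  have h0 := hcross 0
  have h1 := hcross 1
  ext i
  fin_cases i <;> simp_all [cross_apply, funext_iff, Fin.forall_fin_succ]

end ThreeDimensional

lemma Real.exists_cos_eq_and_sin_eq {c s : ℝ} (h : c ^ 2 + s ^ 2 = 1) :
    ∃ θ : ℝ, cos θ = c ∧ sin θ = s := by
  set z : ℂ := ⟨c, s⟩
  have hz : ‖z‖ = 1 := by
    rw [Complex.norm_def, Complex.normSq_mk, ← sq, ← sq, h, Real.sqrt_one]
  have hz0 : z ≠ 0 := norm_ne_zero_iff.1 (hz ▸ one_ne_zero)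
  exact ⟨z.arg, by rw [Complex.cos_arg hz0, hz, div_one], by rw [Complex.sin_arg, hz, div_one]⟩

lemma Real.neg_three_halves_le_cos_add_cos_add_cos_add (θ φ : ℝ) :
    -(3 / 2) ≤ cos θ + cos φ + cos (θ + φ) := by
  rw [cos_add]
  nlinarith [cos_sq_add_sin_sq θ, cos_sq_add_sin_sq φ, sq_nonneg (cos θ + cos φ + 1),
    sq_nonneg (sin θ - sin φ)]

namespace CommTuples

variable {n : ℕ} {G : Type*} [Group G] [TopologicalSpace G]

def conj (g : G) (x : CommTuples n G) : CommTuples n G :=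
  ⟨fun i => g * x.1 i * g⁻¹, fun i j => by rw [conj_mul, conj_mul, x.2 i j]⟩

lemma continuous_conj [IsTopologicalGroup G] :
    Continuous fun p : G × CommTuples n G => conj p.1 p.2 :=
  (continuous_pi fun i => (continuous_fst.mul
    ((continuous_apply i).comp (continuous_subtype_val.comp continuous_snd))).mul
      continuous_fst.inv).subtype_mk _

def mkPair (a b : G) (h : a * b = b * a) : CommTuples 2 G :=
  ⟨![a, b], by simp [Fin.forall_fin_two, h]⟩

@[simp]
lemma mkPair_apply_zero (a b : G) (h : a * b = b * a) : (mkPair a b h).1 0 = a := rfl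

@[simp]
lemma mkPair_apply_one (a b : G) (h : a * b = b * a) : (mkPair a b h).1 1 = b := rfl

lemma ext_two {x y : CommTuples 2 G} (h₀ : x.1 0 = y.1 0) (h₁ : x.1 1 = y.1 1) : x = y :=
  Subtype.ext (funext (Fin.forall_fin_two.2 ⟨h₀, h₁⟩))

lemma continuous_mkPair {X : Type*} [TopologicalSpace X] {a b : X → G} (ha : Continuous a)
    (hb : Continuous b) (h : ∀ t, a t * b t = b t * a t) :
    Continuous fun t => mkPair (a t) (b t) (h t) :=
  (continuous_pi (Fin.forall_fin_two.2 ⟨ha, hb⟩)).subtype_mk _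

end CommTuples

theorem natCard_connectedComponents_eq_two {X : Type*} [TopologicalSpace X] {U : Set X}
    (hU : IsClopen U) (hU₁ : IsPreconnected U) (hU₂ : IsPreconnected Uᶜ) (hne₁ : U.Nonempty)
    (hne₂ : Uᶜ.Nonempty) : Nat.card (ConnectedComponents X) = 2 := by
  have hf := (continuous_boolIndicator_iff_isClopen U).2 hU
  have hmk : ∀ {s : Set X}, IsPreconnected s → ∀ x ∈ s, ∀ y ∈ s,
      ConnectedComponents.mk x = ConnectedComponents.mk y := fun hs x hx y hy =>
    ConnectedComponents.coe_eq_coe.2 (connectedComponent_eq (hs.subset_connectedComponent hx hy))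
  have hbij : Function.Bijective hf.connectedComponentsLift := by
    constructor
    · rintro ⟨x⟩ ⟨y⟩ hxy
      change U.boolIndicator x = U.boolIndicator y at hxy
      by_cases hx : x ∈ U
      · exact hmk hU₁ x hx y
          (by rwa [Set.mem_iff_boolIndicator, ← hxy, ← Set.mem_iff_boolIndicator])
      · exact hmk hU₂ x hx y (by rwa [Set.mem_compl_iff, Set.notMem_iff_boolIndicator, ← hxy,
          ← Set.notMem_iff_boolIndicator])
    · rintro (_ | _)
      · obtain ⟨x, hx⟩ := hne₂
        exact ⟨x, (Set.notMem_iff_boolIndicator U x).1 hx⟩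
      · obtain ⟨x, hx⟩ := hne₁
        exact ⟨x, (Set.mem_iff_boolIndicator U x).1 hx⟩
  rw [Nat.card_eq_of_bijective _ hbij, Nat.card_eq_fintype_card, Fintype.card_bool]

namespace SO3

local notation "M₃" => Matrix (Fin 3) (Fin 3) ℝ

instance : IsTopologicalGroup SO3 where
  continuous_inv := continuous_subtype_val.matrix_transpose.subtype_mk _

lemma trace_conj (P A : SO3) : ((P * A * P⁻¹ : SO3) : M₃).trace = (A : M₃).trace := by
  rw [Submonoid.coe_mul, Submonoid.coe_mul, trace_mul_comm, ← Matrix.mul_assoc,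
    ← Submonoid.coe_mul, inv_mul_cancel, Submonoid.coe_one, Matrix.one_mul]

noncomputable def rotX (θ : ℝ) : SO3 :=
  ⟨!![1, 0, 0; 0, cos θ, -sin θ; 0, sin θ, cos θ], by
    rw [mem_specialOrthogonalGroup_iff_transpose_mul_self, det_fin_three, one_fin_three]
    have := cos_sq_add_sin_sq θ
    constructor
    · ext i j
      fin_cases i <;> fin_cases j <;> simp [mul_apply, Fin.sum_univ_three] <;> linarith
    · simpa [sq, add_comm] using this⟩

lemma coe_rotX (θ : ℝ) : (rotX θ : M₃) = !![1, 0, 0; 0, cos θ, -sin θ; 0, sin θ, cos θ] := rfl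

lemma rotX_zero : rotX 0 = 1 := by
  ext i j
  fin_cases i <;> fin_cases j <;> simp [coe_rotX]

lemma rotX_add (θ φ : ℝ) : rotX (θ + φ) = rotX θ * rotX φ := by
  ext i j
  fin_cases i <;> fin_cases j <;>
    simp [coe_rotX, mul_apply, Fin.sum_univ_three, cos_add, sin_add] <;> ring

lemma trace_rotX (θ : ℝ) : (rotX θ : M₃).trace = 1 + 2 * cos θ := by
  simp [coe_rotX, trace_fin_three, two_mul, add_assoc]

@[fun_prop]
lemma continuous_rotX : Continuous rotX := by
  refine (continuous_matrix fun i j => ?_).subtype_mk _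
  fin_cases i <;> fin_cases j <;> simp <;> fun_prop

lemma exists_eq_rotX_of_mulVec_single_zero {Q : SO3}
    (hQ : (Q : M₃) *ᵥ Pi.single 0 1 = Pi.single 0 1) : ∃ θ, Q = rotX θ := by
  set M : M₃ := (Q : M₃)
  have hMM : Mᵀ * M = 1 := transpose_mul_self_of_mem_specialOrthogonalGroup Q.2
  have hdet : M.det = 1 := det_eq_one_of_mem_specialOrthogonalGroup Q.2
  have hcol : ∀ i, M i 0 = (Pi.single 0 1 : Fin 3 → ℝ) i := fun i => by
    rw [← hQ, mulVec_single_one, col_apply]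
  have hrow : ∀ j, M 0 j = (Pi.single 0 1 : Fin 3 → ℝ) j := fun j => by
    have : Mᵀ *ᵥ Pi.single 0 1 = Pi.single 0 1 := by
      conv_lhs => rw [← hQ, mulVec_mulVec, hMM, one_mulVec]
    rw [← this, mulVec_single_one, col_apply, transpose_apply]
  have h11 : M 1 1 * M 1 1 + M 2 1 * M 2 1 = 1 := by
    simpa [mul_apply, Fin.sum_univ_three, hrow] using congrFun (congrFun hMM 1) 1
  have h12 : M 1 1 * M 1 2 + M 2 1 * M 2 2 = 0 := by
    simpa [mul_apply, Fin.sum_univ_three, hrow] using congrFun (congrFun hMM 1) 2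
  have hdet : M 1 1 * M 2 2 - M 1 2 * M 2 1 = 1 := by
    simpa [det_fin_three, hrow, hcol] using hdet
  obtain ⟨θ, hc, hs⟩ := Real.exists_cos_eq_and_sin_eq (c := M 1 1) (s := M 2 1) (by linarith)
  have h22 : M 2 2 = M 1 1 := by linear_combination M 1 1 * hdet + M 2 1 * h12 - M 2 2 * h11
  have h12' : M 1 2 = -M 2 1 := by linear_combination M 1 1 * h12 - M 2 1 * hdet - M 1 2 * h11
  refine ⟨θ, Subtype.ext ?_⟩
  change M = _
  ext i j
  fin_cases i <;> fin_cases j <;> simp [coe_rotX, hrow, hcol, hc, hs, h22, h12']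

lemma exists_unit_mulVec_eq_self (A : SO3) :
    ∃ v : Fin 3 → ℝ, v ⬝ᵥ v = 1 ∧ (A : M₃) *ᵥ v = v := by
  obtain ⟨v, hv0, hv⟩ := exists_mulVec_eq_self_of_odd (by decide) A.2
  obtain ⟨r, hr⟩ := exists_smul_dotProduct_self_eq_one hv0
  exact ⟨r • v, hr, by rw [mulVec_smul, hv]⟩

lemma mulVec_mulVec_comm {A B : SO3} (h : A * B = B * A) (v : Fin 3 → ℝ) :
    (A : M₃) *ᵥ ((B : M₃) *ᵥ v) = (B : M₃) *ᵥ ((A : M₃) *ᵥ v) := by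
  rw [mulVec_mulVec, mulVec_mulVec, ← Submonoid.coe_mul, h, Submonoid.coe_mul]

theorem exists_common_axis_or_half_turns {A B : SO3} (h : A * B = B * A) :
    (∃ v : Fin 3 → ℝ, v ⬝ᵥ v = 1 ∧ (A : M₃) *ᵥ v = v ∧ (B : M₃) *ᵥ v = v) ∨
    (∃ v w : Fin 3 → ℝ, v ⬝ᵥ v = 1 ∧ w ⬝ᵥ w = 1 ∧ v ⬝ᵥ w = 0 ∧
      (A : M₃) *ᵥ v = v ∧ (A : M₃) *ᵥ w = -w ∧ (B : M₃) *ᵥ v = -v ∧ (B : M₃) *ᵥ w = w) := by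
  obtain ⟨v, hvv, hAv⟩ := exists_unit_mulVec_eq_self A
  obtain ⟨w, hww, hBw⟩ := exists_unit_mulVec_eq_self B
  rcases eq_or_ne (A : M₃) 1 with hA1 | hA1
  · exact Or.inl ⟨w, hww, by rw [hA1, one_mulVec], hBw⟩
  rcases eq_or_ne (B : M₃) 1 with hB1 | hB1
  · exact Or.inl ⟨v, hvv, hAv, by rw [hB1, one_mulVec]⟩
  -- `B` preserves the fixed line of `A` and `A` that of `B`; they act on them by `±1`.
  have hv0 := ne_zero_of_dotProduct_self_eq_one hvv
  have hw0 := ne_zero_of_dotProduct_self_eq_one hww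
  have hAA := transpose_mul_self_of_mem_specialOrthogonalGroup A.2
  have hBB := transpose_mul_self_of_mem_specialOrthogonalGroup B.2
  obtain ⟨c, hc⟩ := exists_eq_smul_of_mulVec_eq_self A.2 hA1 hv0 hAv
    (by rw [mulVec_mulVec_comm h, hAv])
  obtain ⟨d, hd⟩ := exists_eq_smul_of_mulVec_eq_self B.2 hB1 hw0 hBw
    (by rw [← mulVec_mulVec_comm h, hBw])
  rcases eq_one_or_eq_neg_one_of_mulVec_eq_smul hBB hv0 hc with rfl | rfl
  · exact Or.inl ⟨v, hvv, hAv, by rw [hc, one_smul]⟩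
  rcases eq_one_or_eq_neg_one_of_mulVec_eq_smul hAA hw0 hd with rfl | rfl
  · exact Or.inl ⟨w, hww, by rw [hd, one_smul], hBw⟩
  rw [neg_one_smul] at hc hd
  have hvw : v ⬝ᵥ w = 0 := by
    have := mulVec_dotProduct_mulVec hBB v w
    rw [hc, hBw, neg_dotProduct] at this
    linarith
  exact Or.inr ⟨v, w, hvv, hww, hvw, hAv, hd, hc, hBw⟩

def ofOrthonormal {u v : Fin 3 → ℝ} (hu : u ⬝ᵥ u = 1) (hv : v ⬝ᵥ v = 1) (huv : u ⬝ᵥ v = 0) :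
    SO3 :=
  ⟨ofColumns u v (u ⨯₃ v), ofColumns_cross_mem_specialOrthogonalGroup hu hv huv⟩

lemma exists_conj_rotX_of_mulVec_eq_self {v : Fin 3 → ℝ} (hv : v ⬝ᵥ v = 1) :
    ∃ P : SO3, ∀ A : SO3, (A : M₃) *ᵥ v = v → ∃ θ, A = P * rotX θ * P⁻¹ := by
  obtain ⟨w, hww, hvw⟩ := exists_orthogonal_unit (ne_zero_of_dotProduct_self_eq_one hv)
  set P := ofOrthonormal hv hww hvw
  have hP : (P : M₃) *ᵥ Pi.single 0 1 = v := ofColumns_mulVec_single_zero _ _ _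
  refine ⟨P, fun A hA => ?_⟩
  obtain ⟨θ, hθ⟩ := exists_eq_rotX_of_mulVec_single_zero (Q := P⁻¹ * A * P) <| by
    rw [Submonoid.coe_mul, Submonoid.coe_mul, ← mulVec_mulVec, hP, ← mulVec_mulVec, hA, ← hP,
      mulVec_mulVec, ← Submonoid.coe_mul, inv_mul_cancel, Submonoid.coe_one, one_mulVec]
  exact ⟨θ, by rw [← hθ]; group⟩

lemma exists_eq_conj_rotX (A : SO3) : ∃ (P : SO3) (θ : ℝ), A = P * rotX θ * P⁻¹ := by
  obtain ⟨v, hv, hAv⟩ := exists_unit_mulVec_eq_self A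
  obtain ⟨P, hP⟩ := exists_conj_rotX_of_mulVec_eq_self hv
  exact ⟨P, hP A hAv⟩

def halfTurnX : SO3 :=
  ⟨diagonal ![1, -1, -1], diagonal_mem_specialOrthogonalGroup (fun i => by fin_cases i <;> simp)
    (by simp [Fin.prod_univ_three])⟩

def halfTurnY : SO3 :=
  ⟨diagonal ![-1, 1, -1], diagonal_mem_specialOrthogonalGroup (fun i => by fin_cases i <;> simp)
    (by simp [Fin.prod_univ_three])⟩

lemma halfTurnX_mul_halfTurnY_comm : halfTurnX * halfTurnY = halfTurnY * halfTurnX :=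
  Subtype.ext (commute_diagonal _ _)

lemma exists_conj_halfTurns {A B : SO3} {v w : Fin 3 → ℝ} (hv : v ⬝ᵥ v = 1) (hw : w ⬝ᵥ w = 1)
    (hvw : v ⬝ᵥ w = 0) (hAv : (A : M₃) *ᵥ v = v) (hAw : (A : M₃) *ᵥ w = -w)
    (hBv : (B : M₃) *ᵥ v = -v) (hBw : (B : M₃) *ᵥ w = w) :
    ∃ P : SO3, A = P * halfTurnX * P⁻¹ ∧ B = P * halfTurnY * P⁻¹ := by
  refine ⟨ofOrthonormal hv hw hvw, eq_mul_inv_iff_mul_eq.2 (Subtype.ext ?_),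
    eq_mul_inv_iff_mul_eq.2 (Subtype.ext ?_)⟩ <;>
  simp only [Submonoid.coe_mul, ofOrthonormal, halfTurnX, halfTurnY, mul_ofColumns,
    ofColumns_mul_diagonal, mulVec_cross_of_mem_specialOrthogonalGroup A.2,
    mulVec_cross_of_mem_specialOrthogonalGroup B.2, hAv, hAw, hBv, hBw] <;>
  simp

instance : PathConnectedSpace SO3 := by
  have hjoined : ∀ A : SO3, Joined 1 A := fun A => by
    obtain ⟨P, θ, rfl⟩ := exists_eq_conj_rotX A
    refine (JoinedIn.ofLine (f := fun t : ℝ => P * rotX (t * θ) * P⁻¹) (F := Set.univ)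
      (by fun_prop) ?_ (by simp) (Set.subset_univ _)).joined
    rw [zero_mul, rotX_zero, mul_one, mul_inv_cancel]
  exact ⟨⟨1⟩, fun A B => (hjoined A).symm.trans (hjoined B)⟩

noncomputable def rotXPair (θ φ : ℝ) : CommTuples 2 SO3 :=
  CommTuples.mkPair (rotX θ) (rotX φ) (by rw [← rotX_add, ← rotX_add, add_comm])

def halfTurnPair : CommTuples 2 SO3 :=
  CommTuples.mkPair halfTurnX halfTurnY halfTurnX_mul_halfTurnY_comm

/-- Pairs in a common maximal torus, i.e. with a common axis of rotation. -/
def torusPairs : Set (CommTuples 2 SO3) :=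
  Set.range fun p : SO3 × ℝ × ℝ => (rotXPair p.2.1 p.2.2).conj p.1

def halfTurnPairs : Set (CommTuples 2 SO3) :=
  Set.range fun P : SO3 => halfTurnPair.conj P

lemma continuous_rotXPair : Continuous fun p : ℝ × ℝ => rotXPair p.1 p.2 :=
  CommTuples.continuous_mkPair (continuous_rotX.comp continuous_fst)
    (continuous_rotX.comp continuous_snd) _

lemma isPathConnected_torusPairs : IsPathConnected torusPairs :=
  isPathConnected_range (CommTuples.continuous_conj.comp
    (continuous_fst.prodMk (continuous_rotXPair.comp continuous_snd)))

lemma isPathConnected_halfTurnPairs : IsPathConnected halfTurnPairs :=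
  isPathConnected_range (CommTuples.continuous_conj.comp (continuous_id.prodMk continuous_const))

lemma torusPairs_union_halfTurnPairs : torusPairs ∪ halfTurnPairs = Set.univ := by
  refine Set.eq_univ_of_forall fun x => ?_
  rcases exists_common_axis_or_half_turns (x.2 0 1) with ⟨v, hv, hAv, hBv⟩ |
    ⟨v, w, hv, hw, hvw, hAv, hAw, hBv, hBw⟩
  · obtain ⟨P, hP⟩ := exists_conj_rotX_of_mulVec_eq_self hv
    obtain ⟨θ, hθ⟩ := hP _ hAv
    obtain ⟨φ, hφ⟩ := hP _ hBv
    exact Or.inl ⟨(P, θ, φ), (CommTuples.ext_two hθ hφ).symm⟩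
  · obtain ⟨P, hA, hB⟩ := exists_conj_halfTurns hv hw hvw hAv hAw hBv hBw
    exact Or.inr ⟨P, (CommTuples.ext_two hA hB).symm⟩

noncomputable def traceSum (x : CommTuples 2 SO3) : ℝ :=
  (x.1 0 : M₃).trace + (x.1 1 : M₃).trace + ((x.1 0 * x.1 1 : SO3) : M₃).trace

lemma continuous_traceSum : Continuous traceSum := by
  have hcoe : ∀ i, Continuous fun x : CommTuples 2 SO3 => (x.1 i : M₃) := fun i =>
    continuous_subtype_val.comp ((continuous_apply i).comp continuous_subtype_val)
  exact (((hcoe 0).matrix_trace.add (hcoe 1).matrix_trace).add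
    ((hcoe 0).matrix_mul (hcoe 1)).matrix_trace)

lemma traceSum_conj (P : SO3) (x : CommTuples 2 SO3) : traceSum (x.conj P) = traceSum x := by
  simp only [traceSum, CommTuples.conj]
  rw [conj_mul, trace_conj, trace_conj, trace_conj]

lemma traceSum_rotXPair (θ φ : ℝ) :
    traceSum (rotXPair θ φ) = 3 + 2 * (cos θ + cos φ + cos (θ + φ)) := by
  rw [traceSum, rotXPair, CommTuples.mkPair_apply_zero, CommTuples.mkPair_apply_one, ← rotX_add,
    trace_rotX, trace_rotX, trace_rotX]
  ring

lemma traceSum_halfTurnPair : traceSum halfTurnPair = -3 := by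
  norm_num [traceSum, halfTurnPair, halfTurnX, halfTurnY, Fin.sum_univ_three, cons_val_two,
    vecHead, vecTail]

lemma traceSum_of_mem_halfTurnPairs {x : CommTuples 2 SO3} (hx : x ∈ halfTurnPairs) :
    traceSum x = -3 := by
  obtain ⟨P, rfl⟩ := hx
  rw [traceSum_conj, traceSum_halfTurnPair]

lemma traceSum_nonneg_of_mem_torusPairs {x : CommTuples 2 SO3} (hx : x ∈ torusPairs) :
    0 ≤ traceSum x := by
  obtain ⟨⟨P, θ, φ⟩, rfl⟩ := hx
  rw [traceSum_conj, traceSum_rotXPair]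
  linarith [Real.neg_three_halves_le_cos_add_cos_add_cos_add θ φ]

lemma isCompl_halfTurnPairs_torusPairs : IsCompl halfTurnPairs torusPairs :=
  ⟨Set.disjoint_left.2 fun x hh ht => by
    linarith [traceSum_of_mem_halfTurnPairs hh, traceSum_nonneg_of_mem_torusPairs ht],
    codisjoint_iff.2 ((Set.union_comm _ _).trans torusPairs_union_halfTurnPairs)⟩

lemma halfTurnPairs_eq_preimage_traceSum {s : Set ℝ} (h₁ : -3 ∈ s)
    (h₂ : Disjoint s (Set.Ici 0)) : halfTurnPairs = traceSum ⁻¹' s := by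
  refine Set.ext fun x => ⟨fun hx => ?_, fun hx => ?_⟩
  · rwa [Set.mem_preimage, traceSum_of_mem_halfTurnPairs hx]
  · by_contra hh
    have ht : x ∈ torusPairs := isCompl_halfTurnPairs_torusPairs.compl_eq ▸ hh
    exact Set.disjoint_left.1 h₂ hx (traceSum_nonneg_of_mem_torusPairs ht)

lemma isClopen_halfTurnPairs : IsClopen halfTurnPairs :=
  ⟨halfTurnPairs_eq_preimage_traceSum (s := {-3}) rfl (by simp) ▸
      isClosed_singleton.preimage continuous_traceSum,
    halfTurnPairs_eq_preimage_traceSum (s := Set.Iio (-1)) (by norm_num)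
      (Set.Iio_disjoint_Ici (by norm_num)) ▸
      isOpen_Iio.preimage continuous_traceSum⟩

end SO3

/-- The space `Hom(ℤ², SO(3))` of ordered commuting pairs of elements of `SO(3)` has
exactly two connected components. -/
theorem commTuples_two_SO3_two_components :
    Nat.card (ConnectedComponents (CommTuples 2 SO3)) = 2 := by
  have hcompl := SO3.isCompl_halfTurnPairs_torusPairs.compl_eq
  refine natCard_connectedComponents_eq_two SO3.isClopen_halfTurnPairs
    SO3.isPathConnected_halfTurnPairs.isConnected.isPreconnected ?_ ⟨_, Set.mem_range_self 1⟩ ?_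
  · exact hcompl ▸ SO3.isPathConnected_torusPairs.isConnected.isPreconnected
  · exact hcompl ▸ ⟨_, Set.mem_range_self (1, 0, 0)⟩
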